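/- arXiv:1006.2706 — 6 statements merged into one kernel-verified Lean document; each statement's English description precedes it below -/
import Mathlib

section
/- The shuffle product on symmetric polynomials defined by (f1·f2)(x_1,...,x_{n+m}) = sum over shuffles {i_1<...<i_n}, {j_1<...<j_m} partitioning {1,...,n+m} of f1(x_{i_1},...,x_{i_n})·f2(x_{j_1},...,x_{j_m})·(∏_{k,l}(x_{j_l}-x_{i_k}))^{d-1} is associative, for any fixed integer d ≥ 0. -/
/-!
Index the variables of a shuffle product by a finite subset `s` of a linear order instead of by
`Fin (n + m)`. Evaluating the product at the coordinates of `x` on `s`, read in increasing order,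
is the same as the product indexed by `s`, so an inner product can be expanded in place. Both
bracketings then become the sum, over disjoint `A`, `B` of sizes `n`, `m` with complement `C`, of
`f1(x_A) f2(x_B) f3(x_C) W(A,B) W(A,C) W(B,C)`, since `W(A,B) = ∏_{a ∈ A, b ∈ B} (x_b - x_a)^(d-1)`
is multiplicative in each argument; on the left this takes the reindexing `(A ∪ B, A) ↔ (A, B)`
of pairs of nested subsets.
-/

namespace Stmt0

noncomputable section

lemma compl_card {n m : ℕ} (S : Finset (Fin (n + m))) (hS : S.card = n) :
    Sᶜ.card = m := by
  rw [Finset.card_compl, hS, Fintype.card_fin]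
  omega

def shuffleMul (d : ℕ) {n m : ℕ} (f1 : (Fin n → ℚ) → ℚ) (f2 : (Fin m → ℚ) → ℚ) :
    (Fin (n + m) → ℚ) → ℚ := fun x =>
  ∑ S ∈ (Finset.powersetCard n (Finset.univ : Finset (Fin (n + m)))).attach,
    f1 (fun a => x (S.1.orderEmbOfFin ((Finset.mem_powersetCard.mp S.2).2) a)) *
      f2 (fun b => x ((S.1)ᶜ.orderEmbOfFin
        (compl_card S.1 ((Finset.mem_powersetCard.mp S.2).2)) b)) *
      ∏ a : Fin n, ∏ b : Fin m,
        (x ((S.1)ᶜ.orderEmbOfFin (compl_card S.1 ((Finset.mem_powersetCard.mp S.2).2)) b) -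
            x (S.1.orderEmbOfFin ((Finset.mem_powersetCard.mp S.2).2) a)) ^ ((d : ℤ) - 1)

open Finset

section Weight

variable {γ δ : Type*} (d : ℕ) (x : γ → ℚ)

def shuffleWeight (A B : Finset γ) : ℚ :=
  ∏ a ∈ A, ∏ b ∈ B, (x b - x a) ^ ((d : ℤ) - 1)

lemma shuffleWeight_map (φ : δ ↪ γ) (A B : Finset δ) :
    shuffleWeight d x (A.map φ) (B.map φ) = shuffleWeight d (x ∘ φ) A B := by
  simp only [shuffleWeight, prod_map, Function.comp_apply]

variable [DecidableEq γ]

lemma shuffleWeight_union_left {A B : Finset γ} (h : Disjoint A B) (C : Finset γ) :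
    shuffleWeight d x (A ∪ B) C = shuffleWeight d x A C * shuffleWeight d x B C :=
  prod_union h

lemma shuffleWeight_union_right (A : Finset γ) {B C : Finset γ} (h : Disjoint B C) :
    shuffleWeight d x A (B ∪ C) = shuffleWeight d x A B * shuffleWeight d x A C := by
  simp only [shuffleWeight, prod_union h, prod_mul_distrib]

end Weight

lemma prod_orderEmbOfFin {α M : Type*} [LinearOrder α] [CommMonoid M] (s : Finset α) {p : ℕ}
    (h : s.card = p) (g : α → M) : ∏ i : Fin p, g (s.orderEmbOfFin h i) = ∏ a ∈ s, g a := by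
  conv_rhs => rw [← map_orderEmbOfFin_univ s h, prod_map]
  rfl

lemma sum_powersetCard_powersetCard {α M : Type*} [DecidableEq α] [AddCommMonoid M]
    (s : Finset α) (n m : ℕ) (G : Finset α → Finset α → M) :
    ∑ S ∈ s.powersetCard (n + m), ∑ A ∈ S.powersetCard n, G A (S \ A) =
      ∑ A ∈ s.powersetCard n, ∑ B ∈ (s \ A).powersetCard m, G A B := by
  rw [sum_sigma', sum_sigma']
  refine sum_nbij' (fun p => ⟨p.2, p.1 \ p.2⟩) (fun q => ⟨q.1 ∪ q.2, q.1⟩) ?_ ?_ ?_ ?_ ?_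
  · rintro ⟨S, A⟩ hSA
    simp only [mem_sigma, mem_powersetCard] at hSA ⊢
    obtain ⟨⟨hSs, hS⟩, hAS, hA⟩ := hSA
    refine ⟨⟨hAS.trans hSs, hA⟩, sdiff_subset_sdiff hSs subset_rfl, ?_⟩
    rw [card_sdiff_of_subset hAS, hS, hA, Nat.add_sub_cancel_left]
  · rintro ⟨A, B⟩ hAB
    simp only [mem_sigma, mem_powersetCard, subset_sdiff] at hAB ⊢
    obtain ⟨⟨hAs, hA⟩, ⟨hBs, hBA⟩, hB⟩ := hAB
    rw [card_union_of_disjoint hBA.symm, hA, hB]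
    exact ⟨⟨union_subset hAs hBs, rfl⟩, subset_union_left, rfl⟩
  · rintro ⟨S, A⟩ hSA
    simp only [mem_sigma, mem_powersetCard] at hSA
    rw [union_sdiff_of_subset hSA.2.1]
  · rintro ⟨A, B⟩ hAB
    simp only [mem_sigma, mem_powersetCard, subset_sdiff] at hAB
    rw [union_sdiff_cancel_left hAB.2.1.2.symm]
  · exact fun _ _ => rfl

variable {α β : Type*} [LinearOrder α] [LinearOrder β]

def restrictOrdered (x : α → ℚ) (p : ℕ) (s : Finset α) : Fin p → ℚ := fun i =>
  if h : s.card = p then x (s.orderEmbOfFin h i) else 0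

lemma restrictOrdered_of_card (x : α → ℚ) {p : ℕ} {s : Finset α} (h : s.card = p) :
    restrictOrdered x p s = fun i => x (s.orderEmbOfFin h i) := by
  funext i
  simp [restrictOrdered, h]

lemma restrictOrdered_map (φ : β ↪o α) (x : α → ℚ) (p : ℕ) (t : Finset β) :
    restrictOrdered x p (t.map φ.toEmbedding) = restrictOrdered (x ∘ φ) p t := by
  by_cases h : t.card = p
  · have h' : (t.map φ.toEmbedding).card = p := by rwa [card_map]
    have hφ : (fun i => φ (t.orderEmbOfFin h i)) = (t.map φ.toEmbedding).orderEmbOfFin h' :=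
      orderEmbOfFin_unique h' (fun i => mem_map_of_mem _ (orderEmbOfFin_mem t h i))
        (φ.strictMono.comp (t.orderEmbOfFin h).strictMono)
    rw [restrictOrdered_of_card x h', restrictOrdered_of_card _ h, ← hφ]
    rfl
  · funext i
    simp [restrictOrdered, h]

def shuffleOn (d : ℕ) {n m : ℕ} (f1 : (Fin n → ℚ) → ℚ) (f2 : (Fin m → ℚ) → ℚ) (x : α → ℚ)
    (s : Finset α) : ℚ :=
  ∑ A ∈ s.powersetCard n,
    f1 (restrictOrdered x n A) * f2 (restrictOrdered x m (s \ A)) * shuffleWeight d x A (s \ A)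

section Shuffle

variable (d : ℕ) {n m k : ℕ} (f1 : (Fin n → ℚ) → ℚ) (f2 : (Fin m → ℚ) → ℚ)
  (f3 : (Fin k → ℚ) → ℚ)

lemma shuffleOn_map (φ : β ↪o α) (x : α → ℚ) (t : Finset β) :
    shuffleOn d f1 f2 x (t.map φ.toEmbedding) = shuffleOn d f1 f2 (x ∘ φ) t := by
  rw [shuffleOn, powersetCard_map, sum_map]
  refine sum_congr rfl fun A _ => ?_
  simp only [RelEmbedding.coe_toEmbedding, mapEmbedding_apply, ← Finset.map_sdiff,
    restrictOrdered_map, shuffleWeight_map]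

lemma shuffleMul_eq_shuffleOn_univ (x : Fin (n + m) → ℚ) :
    shuffleMul d f1 f2 x = shuffleOn d f1 f2 x univ := by
  rw [shuffleMul, shuffleOn, ← sum_attach (powersetCard n univ)]
  refine sum_congr rfl fun A _ => ?_
  have hA := (mem_powersetCard.mp A.2).2
  have hAc := compl_card A.1 hA
  rw [← compl_eq_univ_sdiff, restrictOrdered_of_card x hA, restrictOrdered_of_card x hAc,
    shuffleWeight, ← prod_orderEmbOfFin A.1 hA]
  simp only [← prod_orderEmbOfFin A.1ᶜ hAc]

lemma shuffleMul_restrictOrdered (x : α → ℚ) {s : Finset α} (h : s.card = n + m) :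
    shuffleMul d f1 f2 (restrictOrdered x (n + m) s) = shuffleOn d f1 f2 x s := by
  conv_rhs => rw [← map_orderEmbOfFin_univ s h, shuffleOn_map]
  rw [restrictOrdered_of_card x h, shuffleMul_eq_shuffleOn_univ]
  rfl

def shuffleOn₃ (x : α → ℚ) (s : Finset α) : ℚ :=
  ∑ A ∈ s.powersetCard n, ∑ B ∈ (s \ A).powersetCard m,
    f1 (restrictOrdered x n A) * f2 (restrictOrdered x m B) *
      f3 (restrictOrdered x k ((s \ A) \ B)) *
        (shuffleWeight d x A B * shuffleWeight d x A ((s \ A) \ B) *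
          shuffleWeight d x B ((s \ A) \ B))

lemma shuffleOn_shuffleMul_left (x : α → ℚ) (s : Finset α) :
    shuffleOn d (shuffleMul d f1 f2) f3 x s = shuffleOn₃ d f1 f2 f3 x s := by
  rw [shuffleOn, shuffleOn₃, ← sum_powersetCard_powersetCard]
  refine sum_congr rfl fun S hS => ?_
  rw [shuffleMul_restrictOrdered d f1 f2 x (mem_powersetCard.mp hS).2, shuffleOn, sum_mul, sum_mul]
  refine sum_congr rfl fun A hA => ?_
  have hAS := (mem_powersetCard.mp hA).1
  have hC : (s \ A) \ (S \ A) = s \ S := by rw [sdiff_sdiff_left, sup_sdiff_cancel_right hAS]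
  have hW : shuffleWeight d x A (s \ S) * shuffleWeight d x (S \ A) (s \ S) =
      shuffleWeight d x S (s \ S) := by
    rw [← shuffleWeight_union_left d x disjoint_sdiff, union_sdiff_of_subset hAS]
  rw [hC, ← hW]
  ring

lemma shuffleOn_shuffleMul_right (x : α → ℚ) {s : Finset α} (hs : s.card = n + m + k) :
    shuffleOn d f1 (shuffleMul d f2 f3) x s = shuffleOn₃ d f1 f2 f3 x s := by
  rw [shuffleOn, shuffleOn₃]
  refine sum_congr rfl fun A hA => ?_
  obtain ⟨hAs, hA⟩ := mem_powersetCard.mp hA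
  have hAc : (s \ A).card = m + k := by rw [card_sdiff_of_subset hAs, hs, hA]; omega
  rw [shuffleMul_restrictOrdered d f2 f3 x hAc, shuffleOn, mul_sum, sum_mul]
  refine sum_congr rfl fun B hB => ?_
  have hW : shuffleWeight d x A B * shuffleWeight d x A ((s \ A) \ B) =
      shuffleWeight d x A (s \ A) := by
    rw [← shuffleWeight_union_right d x A disjoint_sdiff,
      union_sdiff_of_subset (mem_powersetCard.mp hB).1]
  rw [← hW]
  ring

end Shuffle

theorem stmt0_general (d : ℕ) {n m k : ℕ}
    (f1 : (Fin n → ℚ) → ℚ) (f2 : (Fin m → ℚ) → ℚ) (f3 : (Fin k → ℚ) → ℚ)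
    (x : Fin (n + m + k) → ℚ) :
    shuffleMul d (shuffleMul d f1 f2) f3 x =
      shuffleMul d f1 (shuffleMul d f2 f3)
        (fun i => x ((finCongr (Nat.add_assoc n m k)).symm i)) := by
  have hcard : (univ : Finset (Fin (n + m + k))).card = n + (m + k) :=
    (card_fin _).trans (Nat.add_assoc n m k)
  have hcast : (fun i => x ((finCongr (Nat.add_assoc n m k)).symm i)) =
      restrictOrdered x (n + (m + k)) univ := by
    rw [restrictOrdered_of_card x hcard, ← orderEmbOfFin_unique hcard (fun _ => mem_univ _)
      (Fin.cast_strictMono (Nat.add_assoc n m k).symm)]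
    rfl
  rw [hcast, shuffleMul_restrictOrdered d f1 _ x hcard, shuffleMul_eq_shuffleOn_univ,
    shuffleOn_shuffleMul_left, shuffleOn_shuffleMul_right d f1 f2 f3 x (card_fin _)]

/-- Associativity of the shuffle product for symmetric functions. -/
theorem stmt0 (d : ℕ) {n m k : ℕ}
    (f1 : (Fin n → ℚ) → ℚ) (f2 : (Fin m → ℚ) → ℚ) (f3 : (Fin k → ℚ) → ℚ)
    (h1 : ∀ (σ : Equiv.Perm (Fin n)) (y : Fin n → ℚ), f1 (fun i => y (σ i)) = f1 y)
    (h2 : ∀ (σ : Equiv.Perm (Fin m)) (y : Fin m → ℚ), f2 (fun i => y (σ i)) = f2 y)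
    (h3 : ∀ (σ : Equiv.Perm (Fin k)) (y : Fin k → ℚ), f3 (fun i => y (σ i)) = f3 y)
    (x : Fin (n + m + k) → ℚ) (hx : Function.Injective x) :
    shuffleMul d (shuffleMul d f1 f2) f3 x =
      shuffleMul d f1 (shuffleMul d f2 f3)
        (fun i => x ((finCongr (Nat.add_assoc n m k)).symm i)) :=
  stmt0_general d f1 f2 f3 x

end

end Stmt0
end

section
/- The classical limit series P_d^{cl}(z) := lim_{q^{1/2}→1} P_d(z,q^{1/2})/P_d(qz,q^{1/2}) ∈ 1 + zℤ[[z]] is algebraic and satisfies the functional equation P_d^{cl}(z) = 1 + (-1)^{d-1} z (P_d^{cl}(z))^d. -/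
/- STATEMENT 6: The classical limit P_d^{cl}(z) = lim_{q^{1/2}→1} P_d(z)/P_d(qz)
   exists in 1 + zℤ[[z]] and satisfies P_d^{cl}(z) = 1 + (-1)^{d-1} z (P_d^{cl}(z))^d.
   We work with coefficients in the field of rational functions ℚ(t), t = q^{1/2};
   P_d(qz) is `rescale (t²)` applied to P_d.  "The n-th coefficient of the ratio has a
   limit G_n at t = 1" is expressed by: it can be written p/q with q(1) ≠ 0 and
   G_n·q(1) = p(1).  (Note (-1)^{d-1} = (-1)^{d+1}.) -/

namespace Stmt6

noncomputable section

def t : RatFunc ℚ := RatFunc.X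

/-- `P_d = ∑_{n≥0} (-q^{1/2})^{(1-d)n²} z^n / ((1-q)…(1-q^n))`, with `q = t²`. -/
def Pd (d : ℕ) : PowerSeries (RatFunc ℚ) :=
  PowerSeries.mk fun n =>
    (-t) ^ ((1 - (d : ℤ)) * (n : ℤ) ^ 2) / ∏ k ∈ Finset.range n, (1 - t ^ (2 * (k + 1)))

/-! Write `u = t²` and `c = (-t)^(1-d)`. The coefficients of `P = P_d` satisfy
`a_{n+1} (1 - u^(n+1)) = c u^((1-d) n) a_n`, i.e. `P(z) - P(uz) = c z P(u^(1-d) z)`. Dividing by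
`P(uz)` and telescoping `P(u^(1-d) z) / P(uz) = ∏_{j<d} R(u^(-j) z)` for `R(z) = P(z) / P(uz)`
gives `R = 1 + c z ∏_{j<d} R(u^(-j) z)`.

The pairs `(r, r(1))` with `r` regular at `t = 1` form a subring of `ℚ(t) × ℚ` containing
`(c, (-1)^(d-1))` and `(u^(-j), 1)`. The recursion computes each coefficient of `R` from earlier
ones by ring operations, so by induction `(coeff n R, coeff n G)` lies in this subring, where `G`
is the series produced by the same recursion at `t = 1`, i.e. `G = 1 + (-1)^(d-1) z G^d`. -/

open PowerSeries Finset
open scoped Polynomial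

section EvalGraph

variable {K : Type*} [Field K]

/-- The pairs `(r, v)` such that `r` is regular at `a` with value `v` there. -/
def evalGraph (a : K) : Subring (RatFunc K × K) where
  carrier := {x | ∃ p q : K[X], q.eval a ≠ 0 ∧
    x.1 = algebraMap K[X] (RatFunc K) p / algebraMap K[X] (RatFunc K) q ∧
    x.2 * q.eval a = p.eval a}
  one_mem' := ⟨1, 1, by simp, by simp, by simp⟩
  zero_mem' := ⟨0, 1, by simp, by simp, by simp⟩
  neg_mem' := by
    rintro x ⟨p, q, hq, hx, hv⟩
    refine ⟨-p, q, hq, by simp [hx, neg_div], ?_⟩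
    simp [← hv]
  add_mem' := by
    rintro x y ⟨p, q, hq, hx, hv⟩ ⟨p', q', hq', hy, hw⟩
    have hq0 {q : K[X]} (h : q.eval a ≠ 0) : algebraMap K[X] (RatFunc K) q ≠ 0 :=
      RatFunc.algebraMap_ne_zero (by rintro rfl; simp at h)
    refine ⟨p * q' + p' * q, q * q', by simp [hq, hq'], ?_, ?_⟩
    · rw [Prod.fst_add, hx, hy, div_add_div _ _ (hq0 hq) (hq0 hq')]
      simp only [map_add, map_mul]
      ring
    · simp only [Prod.snd_add, Polynomial.eval_mul, Polynomial.eval_add]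
      linear_combination q'.eval a * hv + q.eval a * hw
  mul_mem' := by
    rintro x y ⟨p, q, hq, hx, hv⟩ ⟨p', q', hq', hy, hw⟩
    refine ⟨p * p', q * q', by simp [hq, hq'], by simp [hx, hy, div_mul_div_comm], ?_⟩
    simp only [Prod.snd_mul, Polynomial.eval_mul]
    linear_combination p'.eval a * hv + x.2 * q.eval a * hw

lemma X_mem_evalGraph (a : K) : (RatFunc.X, a) ∈ evalGraph a :=
  ⟨Polynomial.X, 1, by simp, by simp, by simp⟩

lemma inv_mem_evalGraph {a : K} {x : RatFunc K × K} (hx : x ∈ evalGraph a) (hv : x.2 ≠ 0) :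
    (x.1⁻¹, x.2⁻¹) ∈ evalGraph a := by
  obtain ⟨p, q, hq, hr, hpq⟩ := hx
  refine ⟨q, p, by rw [← hpq]; exact mul_ne_zero hv hq, by rw [hr, inv_div], ?_⟩
  rw [← hpq, inv_mul_cancel_left₀ hv]

lemma zpow_mem_evalGraph {a : K} {x : RatFunc K × K} (hx : x ∈ evalGraph a) (hv : x.2 ≠ 0)
    (m : ℤ) : (x.1 ^ m, x.2 ^ m) ∈ evalGraph a := by
  obtain ⟨k, rfl | rfl⟩ := m.eq_nat_or_neg
  · rw [zpow_natCast, zpow_natCast]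
    exact pow_mem hx k
  · simpa using inv_mem_evalGraph (pow_mem hx k) (pow_ne_zero k hv)

end EvalGraph

section CoeffSubring

variable {A B : Type*} [CommRing A] [CommRing B]

def coeffSubring (S : Subring (A × B)) (n : ℕ) : Subring (A⟦X⟧ × B⟦X⟧) where
  carrier := {x | ∀ k ≤ n, (coeff k x.1, coeff k x.2) ∈ S}
  one_mem' k _ := by
    simp only [Prod.fst_one, Prod.snd_one, coeff_one]
    split_ifs
    exacts [S.one_mem, S.zero_mem]
  zero_mem' k _ := by simp [← Prod.zero_eq_mk]
  neg_mem' {x} hx k hk := by simpa using S.neg_mem (hx k hk)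
  add_mem' {x y} hx hy k hk := by simpa using S.add_mem (hx k hk) (hy k hk)
  mul_mem' {x y} hx hy k hk := by
    have hsum : (coeff k (x.1 * y.1), coeff k (x.2 * y.2)) =
        ∑ i ∈ antidiagonal k,
          (coeff i.1 x.1, coeff i.1 x.2) * (coeff i.2 y.1, coeff i.2 y.2) := by
      ext <;> simp [coeff_mul, Prod.fst_sum, Prod.snd_sum]
    rw [Prod.fst_mul, Prod.snd_mul, hsum]
    refine S.sum_mem fun i hi => S.mul_mem (hx _ ?_) (hy _ ?_) <;>
      linarith [mem_antidiagonal.mp hi]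

lemma rescale_mem_coeffSubring {S : Subring (A × B)} {n : ℕ} {x : A⟦X⟧ × B⟦X⟧}
    (hx : x ∈ coeffSubring S n) {b : A × B} (hb : b ∈ S) :
    (rescale b.1 x.1, rescale b.2 x.2) ∈ coeffSubring S n := fun k hk => by
  convert S.mul_mem (S.pow_mem hb k) (hx k hk) using 1
  simp [Prod.ext_iff, coeff_rescale]

theorem coeff_mem_of_eq_one_add_X_mul_prod_rescale (S : Subring (A × B)) {ι : Type*}
    (s : Finset ι) {c : A × B} (hc : c ∈ S) {b : ι → A × B} (hb : ∀ i ∈ s, b i ∈ S)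
    {F : A⟦X⟧} {G : B⟦X⟧}
    (hF : F = 1 + C c.1 * X * ∏ i ∈ s, rescale (b i).1 F)
    (hG : G = 1 + C c.2 * X * ∏ i ∈ s, rescale (b i).2 G) (n : ℕ) :
    (coeff n F, coeff n G) ∈ S := by
  induction n using Nat.strong_induction_on with
  | _ n ih =>
    rw [hF, hG]
    rcases n with _ | n
    · simp only [coeff_zero_eq_constantCoeff, map_add, map_mul, constantCoeff_X, mul_zero,
        zero_mul, add_zero, map_one]
      exact S.one_mem
    · have hprod : (∏ i ∈ s, rescale (b i).1 F, ∏ i ∈ s, rescale (b i).2 G) ∈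
          coeffSubring S n := by
        convert (coeffSubring S n).prod_mem fun i hi =>
          rescale_mem_coeffSubring (x := (F, G)) (fun k hk => ih k (by omega)) (hb i hi) using 1
        simp [Prod.ext_iff, Prod.fst_prod, Prod.snd_prod]
      simp only [map_add, coeff_one, mul_assoc, coeff_C_mul, coeff_succ_X_mul, n.succ_ne_zero,
        if_false, zero_add]
      exact S.mul_mem hc (hprod n le_rfl)

end CoeffSubring

section

variable {R : Type*} [CommSemiring R]

lemma constantCoeff_rescale (a : R) (f : R⟦X⟧) :
    constantCoeff (rescale a f) = constantCoeff f := by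
  rw [← coeff_zero_eq_constantCoeff_apply, coeff_rescale, pow_zero, one_mul,
    coeff_zero_eq_constantCoeff_apply]

lemma coeff_pow_eq_of_trunc_eq {f g : R⟦X⟧} {n : ℕ}
    (h : trunc (n + 1) f = trunc (n + 1) g) (m : ℕ) : coeff n (f ^ m) = coeff n (g ^ m) := by
  rw [← coeff_coe_trunc_of_lt n.lt_succ_self, ← trunc_trunc_pow, h, trunc_trunc_pow,
    coeff_coe_trunc_of_lt n.lt_succ_self]

end

section TelescopingRatio

variable {k : Type*} [Field k] {u : k} {P R : k⟦X⟧}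

lemma prod_rescale_zpow_mul_rescale (hu : u ≠ 0) (h : R * rescale u P = P) (m : ℕ) :
    (∏ j ∈ range m, rescale (u ^ (-(j : ℤ))) R) * rescale u P =
      rescale (u ^ (1 - (m : ℤ))) P := by
  induction m with
  | zero => simp
  | succ m ih =>
    have hm := congrArg (rescale (u ^ (-(m : ℤ)))) h
    rw [map_mul, rescale_rescale, ← zpow_one_add₀ hu, ← sub_eq_add_neg] at hm
    rw [prod_range_succ, mul_right_comm, ih, mul_comm, hm]
    push_cast
    ring_nf

lemma mul_inv_rescale_eq_one_add {c : k} {m : ℕ} (hu : u ≠ 0) (hP : constantCoeff P ≠ 0)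
    (hPc : P = rescale u P + C c * X * rescale (u ^ (1 - (m : ℤ))) P) :
    P * (rescale u P)⁻¹ =
      1 + C c * X * ∏ j ∈ range m, rescale (u ^ (-(j : ℤ))) (P * (rescale u P)⁻¹) := by
  have hPu : constantCoeff (rescale u P) ≠ 0 := by rwa [constantCoeff_rescale]
  have hR : P * (rescale u P)⁻¹ * rescale u P = P := by
    rw [mul_assoc, PowerSeries.inv_mul_cancel _ hPu, mul_one]
  refine mul_right_cancel₀ (b := rescale u P) (fun h0 => hPu (by rw [h0, map_zero])) ?_
  rw [hR, add_mul, one_mul, mul_assoc (C c * X), prod_rescale_zpow_mul_rescale hu hR]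
  exact hPc

end TelescopingRatio

/-- The coefficients of `P_d^{cl}`. Truncating to degrees `≤ n` makes the recursion well founded
and does not change the `n`-th coefficient of the `d`-th power. -/
def PclCoeff (d : ℕ) : ℕ → ℤ
  | 0 => 1
  | n + 1 => (-1) ^ (d + 1) * coeff n ((mk fun k => if k ≤ n then PclCoeff d k else 0) ^ d)

def Pcl (d : ℕ) : ℤ⟦X⟧ := mk (PclCoeff d)

lemma constantCoeff_Pcl (d : ℕ) : constantCoeff (Pcl d) = 1 := by
  simp [Pcl, PclCoeff]

lemma Pcl_eq_one_add (d : ℕ) : Pcl d = 1 + C ((-1 : ℤ) ^ (d + 1)) * X * Pcl d ^ d := by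
  ext (_ | n)
  · simp [Pcl, PclCoeff]
  · have htrunc : trunc (n + 1) (mk fun k => if k ≤ n then PclCoeff d k else 0) =
        trunc (n + 1) (Pcl d) := by
      ext k
      simp only [coeff_trunc, coeff_mk, Pcl]
      split_ifs <;> first | rfl | omega
    rw [mul_assoc, map_add, coeff_C_mul, coeff_succ_X_mul, coeff_one, if_neg n.succ_ne_zero,
      zero_add, ← coeff_pow_eq_of_trunc_eq htrunc, Pcl, coeff_mk, PclCoeff]

lemma constantCoeff_Pd (d : ℕ) : constantCoeff (Pd d) = 1 := by
  simp [Pd]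

lemma coeff_succ_Pd_mul (d n : ℕ) :
    coeff (n + 1) (Pd d) * (1 - (t ^ 2) ^ (n + 1)) =
      (-t) ^ ((1 : ℤ) - d) * ((t ^ 2) ^ ((1 : ℤ) - d)) ^ n * coeff n (Pd d) := by
  have hneg : -t ≠ 0 := neg_ne_zero.mpr RatFunc.X_ne_zero
  have hfactor : (1 : RatFunc ℚ) - t ^ (2 * (n + 1)) ≠ 0 := by
    have hpoly : (1 : RatFunc ℚ) - t ^ (2 * (n + 1)) =
        algebraMap ℚ[X] (RatFunc ℚ) (1 - Polynomial.X ^ (2 * (n + 1))) := by simp [t]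
    rw [hpoly]
    refine RatFunc.algebraMap_ne_zero fun h => ?_
    simpa using congrArg (Polynomial.eval 0) h
  have hsq : (t ^ 2 : RatFunc ℚ) = (-t) ^ (2 : ℤ) := by rw [zpow_two, neg_mul_neg, sq]
  simp only [Pd, coeff_mk, prod_range_succ]
  rw [← pow_mul, div_mul_eq_mul_div, mul_div_mul_right _ _ hfactor, ← mul_div_assoc, hsq,
    ← zpow_mul, ← zpow_natCast, ← zpow_mul, ← zpow_add₀ hneg, ← zpow_add₀ hneg]
  congr 2
  push_cast
  ring

lemma Pd_eq_rescale_add (d : ℕ) :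
    Pd d = rescale (t ^ 2) (Pd d) +
      C ((-t) ^ ((1 : ℤ) - d)) * X * rescale ((t ^ 2) ^ ((1 : ℤ) - d)) (Pd d) := by
  ext (_ | n)
  · simp [constantCoeff_rescale]
  · rw [mul_assoc, map_add, coeff_C_mul, coeff_succ_X_mul, coeff_rescale, coeff_rescale,
      ← mul_assoc, ← coeff_succ_Pd_mul]
    ring

lemma neg_one_zpow_one_sub {α : Type*} [DivisionRing α] (d : ℕ) :
    (-1 : α) ^ ((1 : ℤ) - d) = (-1) ^ (d + 1) := by
  rw [show (1 : ℤ) - d = (d + 1 : ℕ) + (-d) * 2 by push_cast; ring, zpow_add₀ (by norm_num),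
    zpow_mul, zpow_natCast]
  simpa using neg_one_pow_eq_or α d

theorem stmt6 (d : ℕ) :
    ∃ G : PowerSeries ℤ,
      PowerSeries.constantCoeff G = 1 ∧
      G = 1 + PowerSeries.C ((-1 : ℤ) ^ (d + 1)) * PowerSeries.X * G ^ d ∧
      ∀ n : ℕ, ∃ p q : Polynomial ℚ,
        Polynomial.eval 1 q ≠ 0 ∧
        PowerSeries.coeff n (Pd d * (PowerSeries.rescale (t ^ 2) (Pd d))⁻¹) =
          algebraMap (Polynomial ℚ) (RatFunc ℚ) p / algebraMap (Polynomial ℚ) (RatFunc ℚ) q ∧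
        ((PowerSeries.coeff (R := ℤ) n G : ℚ)) * Polynomial.eval 1 q = Polynomial.eval 1 p := by
  refine ⟨Pcl d, constantCoeff_Pcl d, Pcl_eq_one_add d, fun n => ?_⟩
  have hc : ((-t) ^ ((1 : ℤ) - d), (-1 : ℚ) ^ (d + 1)) ∈ evalGraph (1 : ℚ) := by
    rw [← neg_one_zpow_one_sub]
    exact zpow_mem_evalGraph (neg_mem (X_mem_evalGraph 1)) (by norm_num) _
  have hb (j : ℕ) : ((t ^ 2) ^ (-(j : ℤ)), (1 : ℚ)) ∈ evalGraph (1 : ℚ) := by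
    simpa [t] using
      zpow_mem_evalGraph (pow_mem (X_mem_evalGraph (1 : ℚ)) 2) (by norm_num) (-(j : ℤ))
  have hR := mul_inv_rescale_eq_one_add (pow_ne_zero 2 RatFunc.X_ne_zero)
    (by simp [constantCoeff_Pd]) (Pd_eq_rescale_add d)
  have hG : map (Int.castRingHom ℚ) (Pcl d) =
      1 + C ((-1 : ℚ) ^ (d + 1)) * X *
        ∏ _j ∈ range d, rescale 1 (map (Int.castRingHom ℚ) (Pcl d)) := by
    conv_lhs => rw [Pcl_eq_one_add]
    simp [rescale_one]
  obtain ⟨p, q, hq, hpq, hval⟩ :=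
    coeff_mem_of_eq_one_add_X_mul_prod_rescale (evalGraph (1 : ℚ)) (range d) hc
      (fun j _ => hb j) hR hG n
  exact ⟨p, q, hq, hpq, by simpa using hval⟩

end

end Stmt6
end

section
/- Given a commutative ring with a group homomorphism ε: ℤ^I → ℤ/2ℤ and an algebra H graded by ℤ_{≥0}^I with a ℤ/2ℤ-valued bilinear form β on (ℤ/2ℤ)^I satisfying β(γ,γ)=0 for all γ, choose a bilinear form ψ with ψ(γ1,γ2)+ψ(γ2,γ1)=β(γ1,γ2). If the original product satisfies a·b = (-1)^{β(γ1,γ2)+ε(γ1)ε(γ2)} b·a for a ∈ H_{γ1}, b ∈ H_{γ2}, then the modified product a⋆b := (-1)^{ψ(γ1,γ2)} a·b is associative and supercommutative with parity ε: a⋆b = (-1)^{ε(γ1)ε(γ2)} b⋆a. -/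
/-! Twisting a graded product by a sign `(-1)^σ(γ1,γ2)` keeps it associative as soon as `σ` is a
2-cocycle, which every bilinear form is. Twisting also multiplies the commutation sign by
`(-1)^(σ(γ1,γ2) + σ(γ2,γ1))`; for `σ = ψ` this is `(-1)^β(γ1,γ2)`, which cancels the `β` in the
commutation rule of the original product and leaves `(-1)^(ε(γ1)ε(γ2))`. -/

namespace Stmt7

open GradedMonoid

theorem neg_one_pow_val_add {R : Type*} [Ring R] (a b : ZMod 2) :
    (-1 : R) ^ (a + b).val = (-1) ^ a.val * (-1) ^ b.val := by
  rw [← pow_add, ZMod.val_add, ← neg_one_pow_eq_pow_mod_two]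

theorem mk_smul_eq_mk_smul {ι M : Type*} {A : ι → Type*} [∀ γ, SMul M (A γ)] (c : M)
    {γ γ' : ι} {a : A γ} {b : A γ'} (h : mk γ a = mk γ' b) :
    mk γ (c • a) = mk γ' (c • b) :=
  congrArg (Sigma.map id fun _ x => c • x) h

section Twist

variable {ι : Type*} [Add ι] {A : ι → Type*} [∀ γ, AddCommGroup (A γ)] [GMul A]

def twistMul (σ : ι → ι → ZMod 2) {γ1 γ2 : ι} (x : A γ1) (y : A γ2) : A (γ1 + γ2) :=
  (-1 : ℤ) ^ (σ γ1 γ2).val • GMul.mul x y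

theorem mk_twistMul_assoc (σ : ι → ι → ZMod 2)
    (hσ : ∀ γ1 γ2 γ3, σ (γ1 + γ2) γ3 + σ γ1 γ2 = σ γ1 (γ2 + γ3) + σ γ2 γ3)
    (hsmul_left : ∀ (c : ℤ) {γ1 γ2 : ι} (x : A γ1) (y : A γ2),
      GMul.mul (c • x) y = c • GMul.mul x y)
    (hsmul_right : ∀ (c : ℤ) {γ1 γ2 : ι} (x : A γ1) (y : A γ2),
      GMul.mul x (c • y) = c • GMul.mul x y)
    (hassoc : ∀ {γ1 γ2 γ3 : ι} (x : A γ1) (y : A γ2) (z : A γ3),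
      mk ((γ1 + γ2) + γ3) (GMul.mul (GMul.mul x y) z) =
        mk (γ1 + (γ2 + γ3)) (GMul.mul x (GMul.mul y z)))
    {γ1 γ2 γ3 : ι} (x : A γ1) (y : A γ2) (z : A γ3) :
    mk ((γ1 + γ2) + γ3) (twistMul σ (twistMul σ x y) z) =
      mk (γ1 + (γ2 + γ3)) (twistMul σ x (twistMul σ y z)) := by
  simp only [twistMul, hsmul_left, hsmul_right, smul_smul, ← neg_one_pow_val_add, hσ]
  exact mk_smul_eq_mk_smul _ (hassoc x y z)

theorem mk_twistMul_comm (σ c : ι → ι → ZMod 2)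
    (hcomm : ∀ {γ1 γ2 : ι} (x : A γ1) (y : A γ2),
      mk (γ1 + γ2) (GMul.mul x y) = mk (γ2 + γ1) ((-1 : ℤ) ^ (c γ1 γ2).val • GMul.mul y x))
    {γ1 γ2 : ι} (x : A γ1) (y : A γ2) :
    mk (γ1 + γ2) (twistMul σ x y) =
      mk (γ2 + γ1) ((-1 : ℤ) ^ (c γ1 γ2 + σ γ1 γ2 + σ γ2 γ1).val • twistMul σ y x) := by
  have hsign : σ γ1 γ2 + c γ1 γ2 = c γ1 γ2 + σ γ1 γ2 + σ γ2 γ1 + σ γ2 γ1 := by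
    rw [add_assoc _ (σ γ2 γ1), CharTwo.add_self_eq_zero, add_zero, add_comm]
  rw [twistMul, mk_smul_eq_mk_smul _ (hcomm x y), twistMul, smul_smul, smul_smul,
    ← neg_one_pow_val_add, ← neg_one_pow_val_add, hsign]

end Twist

theorem stmt7_general {I : Type*} (A : (I → ℕ) → Type*) [∀ γ, AddCommGroup (A γ)]
    [GradedMonoid.GMul A]
    -- the product is ℤ-bilinear
    (hsmul_left : ∀ (c : ℤ) {γ1 γ2 : I → ℕ} (x : A γ1) (y : A γ2),
      GradedMonoid.GMul.mul (c • x) y = c • GradedMonoid.GMul.mul x y)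
    (hsmul_right : ∀ (c : ℤ) {γ1 γ2 : I → ℕ} (x : A γ1) (y : A γ2),
      GradedMonoid.GMul.mul x (c • y) = c • GradedMonoid.GMul.mul x y)
    -- and associative
    (hassoc : ∀ {γ1 γ2 γ3 : I → ℕ} (x : A γ1) (y : A γ2) (z : A γ3),
      GradedMonoid.mk ((γ1 + γ2) + γ3)
          (GradedMonoid.GMul.mul (GradedMonoid.GMul.mul x y) z) =
        GradedMonoid.mk (γ1 + (γ2 + γ3))
          (GradedMonoid.GMul.mul x (GradedMonoid.GMul.mul y z)))
    (ε : (I → ℕ) → ZMod 2)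
    (β ψ : (I → ℕ) → (I → ℕ) → ZMod 2)
    (hψβ : ∀ γ1 γ2, ψ γ1 γ2 + ψ γ2 γ1 = β γ1 γ2)
    (hψl : ∀ γ1 γ2 γ3, ψ (γ1 + γ2) γ3 = ψ γ1 γ3 + ψ γ2 γ3)
    (hψr : ∀ γ1 γ2 γ3, ψ γ1 (γ2 + γ3) = ψ γ1 γ2 + ψ γ1 γ3)
    -- the commutation rule for the original product
    (hcomm : ∀ {γ1 γ2 : I → ℕ} (x : A γ1) (y : A γ2),
      GradedMonoid.mk (γ1 + γ2) (GradedMonoid.GMul.mul x y) =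
        GradedMonoid.mk (γ2 + γ1)
          ((-1 : ℤ) ^ (β γ1 γ2 + ε γ1 * ε γ2).val • GradedMonoid.GMul.mul y x))
    -- the modified product ⋆
    (star : ∀ {γ1 γ2 : I → ℕ}, A γ1 → A γ2 → A (γ1 + γ2))
    (hstar : ∀ {γ1 γ2 : I → ℕ} (x : A γ1) (y : A γ2),
      star x y = (-1 : ℤ) ^ (ψ γ1 γ2).val • GradedMonoid.GMul.mul x y) :
    (∀ {γ1 γ2 γ3 : I → ℕ} (x : A γ1) (y : A γ2) (z : A γ3),
      GradedMonoid.mk ((γ1 + γ2) + γ3) (star (star x y) z) =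
        GradedMonoid.mk (γ1 + (γ2 + γ3)) (star x (star y z))) ∧
    (∀ {γ1 γ2 : I → ℕ} (x : A γ1) (y : A γ2),
      GradedMonoid.mk (γ1 + γ2) (star x y) =
        GradedMonoid.mk (γ2 + γ1) ((-1 : ℤ) ^ (ε γ1 * ε γ2).val • star y x)) := by
  have hcocycle : ∀ γ1 γ2 γ3, ψ (γ1 + γ2) γ3 + ψ γ1 γ2 = ψ γ1 (γ2 + γ3) + ψ γ2 γ3 := by
    intro γ1 γ2 γ3
    rw [hψl, hψr]
    ring
  have hsign : ∀ γ1 γ2, β γ1 γ2 + ε γ1 * ε γ2 + ψ γ1 γ2 + ψ γ2 γ1 = ε γ1 * ε γ2 := by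
    intro γ1 γ2
    rw [add_assoc, hψβ, add_right_comm, CharTwo.add_self_eq_zero, zero_add]
  refine ⟨fun x y z => ?_, fun x y => ?_⟩
  · simpa only [twistMul, hstar] using
      mk_twistMul_assoc ψ hcocycle hsmul_left hsmul_right hassoc x y z
  · simpa only [twistMul, hstar, hsign] using mk_twistMul_comm ψ _ hcomm x y

theorem stmt7 {I : Type*} (A : (I → ℕ) → Type*) [∀ γ, AddCommGroup (A γ)]
    [GradedMonoid.GMul A]
    -- the product is ℤ-bilinear
    (hsmul_left : ∀ (c : ℤ) {γ1 γ2 : I → ℕ} (x : A γ1) (y : A γ2),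
      GradedMonoid.GMul.mul (c • x) y = c • GradedMonoid.GMul.mul x y)
    (hsmul_right : ∀ (c : ℤ) {γ1 γ2 : I → ℕ} (x : A γ1) (y : A γ2),
      GradedMonoid.GMul.mul x (c • y) = c • GradedMonoid.GMul.mul x y)
    -- and associative
    (hassoc : ∀ {γ1 γ2 γ3 : I → ℕ} (x : A γ1) (y : A γ2) (z : A γ3),
      GradedMonoid.mk ((γ1 + γ2) + γ3)
          (GradedMonoid.GMul.mul (GradedMonoid.GMul.mul x y) z) =
        GradedMonoid.mk (γ1 + (γ2 + γ3))
          (GradedMonoid.GMul.mul x (GradedMonoid.GMul.mul y z)))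
    (ε : (I → ℕ) → ZMod 2) (hε : ∀ γ1 γ2, ε (γ1 + γ2) = ε γ1 + ε γ2)
    (β ψ : (I → ℕ) → (I → ℕ) → ZMod 2)
    (hβquad : ∀ γ, β γ γ = 0)
    (hψβ : ∀ γ1 γ2, ψ γ1 γ2 + ψ γ2 γ1 = β γ1 γ2)
    (hψl : ∀ γ1 γ2 γ3, ψ (γ1 + γ2) γ3 = ψ γ1 γ3 + ψ γ2 γ3)
    (hψr : ∀ γ1 γ2 γ3, ψ γ1 (γ2 + γ3) = ψ γ1 γ2 + ψ γ1 γ3)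
    -- the commutation rule for the original product
    (hcomm : ∀ {γ1 γ2 : I → ℕ} (x : A γ1) (y : A γ2),
      GradedMonoid.mk (γ1 + γ2) (GradedMonoid.GMul.mul x y) =
        GradedMonoid.mk (γ2 + γ1)
          ((-1 : ℤ) ^ (β γ1 γ2 + ε γ1 * ε γ2).val • GradedMonoid.GMul.mul y x))
    -- the modified product ⋆
    (star : ∀ {γ1 γ2 : I → ℕ}, A γ1 → A γ2 → A (γ1 + γ2))
    (hstar : ∀ {γ1 γ2 : I → ℕ} (x : A γ1) (y : A γ2),
      star x y = (-1 : ℤ) ^ (ψ γ1 γ2).val • GradedMonoid.GMul.mul x y) :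
    (∀ {γ1 γ2 γ3 : I → ℕ} (x : A γ1) (y : A γ2) (z : A γ3),
      GradedMonoid.mk ((γ1 + γ2) + γ3) (star (star x y) z) =
        GradedMonoid.mk (γ1 + (γ2 + γ3)) (star x (star y z))) ∧
    (∀ {γ1 γ2 : I → ℕ} (x : A γ1) (y : A γ2),
      GradedMonoid.mk (γ1 + γ2) (star x y) =
        GradedMonoid.mk (γ2 + γ1) ((-1 : ℤ) ^ (ε γ1 * ε γ2).val • star y x)) :=
  stmt7_general A hsmul_left hsmul_right hassoc ε β ψ hψβ hψl hψr hcomm star hstar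

end Stmt7
end

section
/- In the quantum torus over ℚ(q^{1/2}) with generators ê_1, ê_2, ê_{12} satisfying ê_1·ê_2 = q^{-1} ê_2·ê_1 = -q^{-1/2} ê_{12}, the pentagon-type identity (q^{1/2}ê_1;q)_∞ · (q^{1/2}ê_2;q)_∞ = (q^{1/2}ê_2;q)_∞ · (q^{1/2}ê_{12};q)_∞ · (q^{1/2}ê_1;q)_∞ holds. -/
namespace Stmt10

noncomputable section

abbrev F := RatFunc ℚ

def t : F := RatFunc.X

def q : F := t ^ 2

/-- `(q;q)_n` -/
def qfac (n : ℕ) : F := ∏ k ∈ Finset.range n, (1 - q ^ (k + 1))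

/-- An element of the (completed) quantum torus: the coefficients of the normally ordered
monomials `ê₁^a ê₂^b`. -/
abbrev M := ℕ × ℕ → F

/-- Multiplication in the quantum torus: `ê₂^{a₂} ê₁^{b₁} = q^{a₂ b₁} ê₁^{b₁} ê₂^{a₂}`. -/
def mulM (f g : M) : M := fun c =>
  ∑ a1 ∈ Finset.range (c.1 + 1), ∑ a2 ∈ Finset.range (c.2 + 1),
    f (a1, a2) * g (c.1 - a1, c.2 - a2) * q ^ (a2 * (c.1 - a1))

/-- `(q^{1/2} ê₁; q)_∞` -/
def A1 : M := fun c => if c.2 = 0 then (-1 : F) ^ c.1 * t ^ (c.1 ^ 2) / qfac c.1 else 0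

/-- `(q^{1/2} ê₂; q)_∞` -/
def A2 : M := fun c => if c.1 = 0 then (-1 : F) ^ c.2 * t ^ (c.2 ^ 2) / qfac c.2 else 0

/-- `(q^{1/2} ê₁₂; q)_∞`, where `ê₁₂ = -q^{1/2} ê₁ ê₂` -/
def A12 : M := fun c => if c.1 = c.2 then q ^ (c.1 ^ 2) / qfac c.1 else 0

/-!
All three series are supported on lines (`A1` on powers of `ê₁`, `A2` on powers of `ê₂`, `A12`
on the diagonal), so the coefficient of `ê₁^a ê₂^b` on the right-hand side is a single sum over
the exponent `k` of `ê₁₂`. After removing the common factor `(-1)^(a+b) t^(a²+b²)`, the identity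
becomes the `q`-series identity
  `∑_k q^((a-k)(b-k)) / ((q;q)_k (q;q)_(a-k) (q;q)_(b-k)) = 1 / ((q;q)_a (q;q)_b)`,
valid for any `q` that is not a root of unity. It follows by induction on `b`: splitting
`1 - q^(b+1) = (1 - q^(b+1-k)) + q^(b+1-k) (1 - q^k)` gives a Pascal-type recurrence for the
summands, and the resulting two sums recombine into the sum for `b`.
-/

open Finset

section QPochhammer

variable {K : Type*} [Field K] (r : K)

def qPoch (n : ℕ) : K := ∏ k ∈ range n, (1 - r ^ (k + 1))

@[simp] lemma qPoch_zero : qPoch r 0 = 1 := prod_range_zero _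

lemma qPoch_succ (n : ℕ) : qPoch r (n + 1) = qPoch r n * (1 - r ^ (n + 1)) :=
  prod_range_succ _ _

variable {r}

lemma one_sub_pow_succ_ne_zero (hr : ¬IsOfFinOrder r) (n : ℕ) : 1 - r ^ (n + 1) ≠ 0 :=
  sub_ne_zero.mpr fun h => hr (isOfFinOrder_iff_pow_eq_one.mpr ⟨n + 1, n.succ_pos, h.symm⟩)

lemma qPoch_ne_zero (hr : ¬IsOfFinOrder r) (n : ℕ) : qPoch r n ≠ 0 :=
  prod_ne_zero_iff.mpr fun k _ => one_sub_pow_succ_ne_zero hr k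

variable (r) in
-- The guard encodes `1 / (r; r)_{b-k} = 0` for `k > b`, which truncated subtraction would lose.
def pentagonSummand (a b k : ℕ) : K :=
  if k ≤ b then r ^ ((a - k) * (b - k)) / (qPoch r k * qPoch r (a - k) * qPoch r (b - k)) else 0

lemma pentagonSummand_zero_succ (hr : ¬IsOfFinOrder r) (a b : ℕ) :
    (1 - r ^ (b + 1)) * pentagonSummand r a (b + 1) 0 = r ^ a * pentagonSummand r a b 0 := by
  simp only [pentagonSummand, if_pos (Nat.zero_le _), Nat.sub_zero, qPoch_zero, qPoch_succ]
  have := qPoch_ne_zero hr a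
  have := qPoch_ne_zero hr b
  have := one_sub_pow_succ_ne_zero hr b
  field_simp
  ring

lemma pentagonSummand_succ_succ (hr : ¬IsOfFinOrder r) {a j : ℕ} (hj : j < a) (b : ℕ) :
    (1 - r ^ (b + 1)) * pentagonSummand r a (b + 1) (j + 1) =
      r ^ (a - (j + 1)) * pentagonSummand r a b (j + 1) +
        (1 - r ^ (a - j)) * pentagonSummand r a b j := by
  obtain ⟨x, rfl⟩ : ∃ x, a = j + 1 + x := ⟨a - (j + 1), by omega⟩
  have e1 : j + 1 + x - (j + 1) = x := by omega
  have e2 : j + 1 + x - j = x + 1 := by omega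
  have := qPoch_ne_zero hr j
  have := qPoch_ne_zero hr x
  have := one_sub_pow_succ_ne_zero hr j
  have := one_sub_pow_succ_ne_zero hr x
  rcases lt_trichotomy j b with hjb | rfl | hbj
  · obtain ⟨y, rfl⟩ : ∃ y, b = j + 1 + y := ⟨b - (j + 1), by omega⟩
    have e3 : j + 1 + y - (j + 1) = y := by omega
    have e4 : j + 1 + y + 1 - (j + 1) = y + 1 := by omega
    have e5 : j + 1 + y - j = y + 1 := by omega
    have := qPoch_ne_zero hr y
    have := one_sub_pow_succ_ne_zero hr y
    simp only [pentagonSummand, if_pos (show j + 1 ≤ j + 1 + y + 1 by omega),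
      if_pos (show j + 1 ≤ j + 1 + y by omega), if_pos (show j ≤ j + 1 + y by omega),
      e1, e2, e3, e4, e5, qPoch_succ]
    field_simp
    ring
  · simp only [pentagonSummand, if_pos le_rfl, if_neg (Nat.not_succ_le_self j),
      e1, e2, Nat.sub_self, qPoch_zero, qPoch_succ]
    field_simp
    ring
  · simp [pentagonSummand, show ¬j + 1 ≤ b + 1 by omega, show ¬j + 1 ≤ b by omega,
      show ¬j ≤ b by omega]

lemma sum_pentagonSummand_succ (hr : ¬IsOfFinOrder r) (a b : ℕ) :
    (1 - r ^ (b + 1)) * ∑ k ∈ range (a + 1), pentagonSummand r a (b + 1) k =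
      ∑ k ∈ range (a + 1), pentagonSummand r a b k := by
  have shifted : ∑ j ∈ range a, r ^ (a - (j + 1)) * pentagonSummand r a b (j + 1) +
      r ^ a * pentagonSummand r a b 0 =
        ∑ k ∈ range (a + 1), r ^ (a - k) * pentagonSummand r a b k := by
    rw [sum_range_succ' _ a, Nat.sub_zero]
  have padded : ∑ j ∈ range a, (1 - r ^ (a - j)) * pentagonSummand r a b j =
      ∑ k ∈ range (a + 1), (1 - r ^ (a - k)) * pentagonSummand r a b k := by
    simp [sum_range_succ]
  rw [mul_sum, sum_range_succ', pentagonSummand_zero_succ hr,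
    sum_congr rfl fun j hj => pentagonSummand_succ_succ hr (mem_range.mp hj) b,
    sum_add_distrib, add_right_comm, shifted, padded, ← sum_add_distrib]
  exact sum_congr rfl fun k _ => by ring

theorem sum_pentagonSummand (hr : ¬IsOfFinOrder r) (a b : ℕ) :
    ∑ k ∈ range (a + 1), pentagonSummand r a b k = (qPoch r a * qPoch r b)⁻¹ := by
  induction b with
  | zero => simp [pentagonSummand]
  | succ b ih =>
    have h := sum_pentagonSummand_succ hr a b
    rw [ih] at h
    have := qPoch_ne_zero hr a
    have := qPoch_ne_zero hr b
    have := one_sub_pow_succ_ne_zero hr b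
    rw [qPoch_succ, ← mul_assoc, mul_inv, ← h]
    field_simp

end QPochhammer

lemma not_isOfFinOrder_q : ¬IsOfFinOrder q := by
  have hX : ¬IsOfFinOrder t := not_isOfFinOrder_of_injective_pow fun n m h => by
    simp only [t, ← RatFunc.algebraMap_X, ← map_pow] at h
    simpa using congrArg Polynomial.natDegree (RatFunc.algebraMap_injective ℚ h)
  simpa [q] using hX

lemma qfac_eq_qPoch : qfac = qPoch q := rfl

lemma mulM_apply_of_left_snd_zero {f : M} (hf : ∀ c : ℕ × ℕ, c.2 ≠ 0 → f c = 0) (g : M)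
    (a b : ℕ) : mulM f g (a, b) = ∑ k ∈ range (a + 1), f (k, 0) * g (a - k, b) := by
  refine sum_congr rfl fun k _ => ?_
  rw [sum_eq_single 0 (fun j _ hj => by simp [hf (k, j) hj]) (by simp)]
  simp

lemma mulM_apply_of_left_fst_zero {f : M} (hf : ∀ c : ℕ × ℕ, c.1 ≠ 0 → f c = 0) (g : M)
    (a b : ℕ) :
    mulM f g (a, b) = ∑ j ∈ range (b + 1), f (0, j) * g (a, b - j) * q ^ (j * a) := by
  rw [mulM, sum_eq_single 0 (fun k _ hk => sum_eq_zero fun j _ => by simp [hf (k, j) hk])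
    (by simp)]
  simp

lemma mulM_apply_of_right_snd_zero (f : M) {g : M} (hg : ∀ c : ℕ × ℕ, c.2 ≠ 0 → g c = 0)
    (a b : ℕ) :
    mulM f g (a, b) = ∑ k ∈ range (a + 1), f (k, b) * g (a - k, 0) * q ^ (b * (a - k)) := by
  refine sum_congr rfl fun k _ => ?_
  rw [sum_eq_single b (fun j hj hjb => by simp [hg (a - k, b - j) (by simp at hj; omega)])
    (by simp)]
  simp

def dilogCoeff (n : ℕ) : F := (-1) ^ n * t ^ (n ^ 2) / qfac n

lemma A1_apply (a b : ℕ) : A1 (a, b) = if b = 0 then dilogCoeff a else 0 := rfl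

lemma A2_apply (a b : ℕ) : A2 (a, b) = if a = 0 then dilogCoeff b else 0 := rfl

lemma A1_eq_zero_of_snd_ne_zero (c : ℕ × ℕ) (hc : c.2 ≠ 0) : A1 c = 0 := if_neg hc

lemma A2_eq_zero_of_fst_ne_zero (c : ℕ × ℕ) (hc : c.1 ≠ 0) : A2 c = 0 := if_neg hc

lemma mulM_A1_A2 (a b : ℕ) : mulM A1 A2 (a, b) = dilogCoeff a * dilogCoeff b := by
  rw [mulM_apply_of_left_snd_zero A1_eq_zero_of_snd_ne_zero,
    sum_eq_single a (fun k hk hka => by simp [A2_apply, show a - k ≠ 0 by simp at hk; omega])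
      (by simp)]
  simp [A1_apply, A2_apply]

lemma mulM_A2_A12 (k b : ℕ) : mulM A2 A12 (k, b) =
    if k ≤ b then dilogCoeff (b - k) * (q ^ (k ^ 2) / qfac k) * q ^ ((b - k) * k) else 0 := by
  rw [mulM_apply_of_left_fst_zero A2_eq_zero_of_fst_ne_zero]
  split_ifs with hkb
  · rw [sum_eq_single (b - k)
      (fun j hj hjk => by simp [A12, show k ≠ b - j by simp at hj; omega]) (by simp)]
    simp [A2_apply, A12, Nat.sub_sub_self hkb]
  · exact sum_eq_zero fun j hj => by simp [A12, show k ≠ b - j by simp at hj; omega]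

lemma mulM_A2_A12_mul_dilogCoeff {a k : ℕ} (hk : k ≤ a) (b : ℕ) :
    mulM A2 A12 (k, b) * dilogCoeff (a - k) * q ^ (b * (a - k)) =
      (-1) ^ (a + b) * t ^ (a ^ 2 + b ^ 2) * pentagonSummand q a b k := by
  rw [mulM_A2_A12, pentagonSummand]
  split_ifs with hkb
  · obtain ⟨x, rfl⟩ : ∃ x, a = k + x := ⟨a - k, by omega⟩
    obtain ⟨y, rfl⟩ : ∃ y, b = k + y := ⟨b - k, by omega⟩
    have := qPoch_ne_zero not_isOfFinOrder_q k
    have := qPoch_ne_zero not_isOfFinOrder_q x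
    have := qPoch_ne_zero not_isOfFinOrder_q y
    simp only [dilogCoeff, qfac_eq_qPoch, Nat.add_sub_cancel_left]
    rw [show k + x + (k + y) = x + y + 2 * k by ring, pow_add _ (x + y), pow_mul (-1 : F) 2 k,
      neg_one_sq, one_pow, mul_one]
    simp only [q]
    field_simp
    ring
  · simp

theorem stmt10 : mulM A1 A2 = mulM (mulM A2 A12) A1 := by
  funext ⟨a, b⟩
  rw [mulM_A1_A2, mulM_apply_of_right_snd_zero _ A1_eq_zero_of_snd_ne_zero,
    sum_congr rfl fun k hk => by
      rw [A1_apply, if_pos rfl, mulM_A2_A12_mul_dilogCoeff (by simp at hk; omega)],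
    ← mul_sum, sum_pentagonSummand not_isOfFinOrder_q]
  have := qPoch_ne_zero not_isOfFinOrder_q a
  have := qPoch_ne_zero not_isOfFinOrder_q b
  simp only [dilogCoeff, qfac_eq_qPoch]
  field_simp
  ring

end

end Stmt10
end

section
/- In the Cohomological Hall algebra of the quiver A_2 (realized as the algebra generated by odd elements ξ_i, η_j for i,j ≥ 0 with relations ξ_iξ_j + ξ_jξ_i = 0, η_iη_j + η_jη_i = 0, and η_i ξ_j = ξ_{j+1}η_i - ξ_j η_{i+1}), the elements ν_i^1 := ξ_0 η_i for i ≥ 0 pairwise anticommute: ν_i^1 ν_j^1 + ν_j^1 ν_i^1 = 0, and similarly the elements ν_i^2 := ξ_i η_0 pairwise anticommute. -/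
/-! Moving `η_i` across the second `ξ_0` in `ξ_0 η_i ξ_0 η_j` produces one term containing `ξ_0²`
and one equal to `ξ_0 ξ_1 η_i η_j`; since `ξ_0² = 0`, the anticommutativity of the `η`'s gives the
first claim. Symmetrically, `ξ_i η_0 ξ_j η_0 = -ξ_i ξ_j η_1 η_0` because `η_0² = 0`, and the `ξ`'s
anticommute. The squares vanish because `x = -x` forces `x = 0` over `ℚ`. -/

namespace Stmt11

noncomputable section

abbrev FA := FreeAlgebra ℚ (ℕ ⊕ ℕ)

def xiF (i : ℕ) : FA := FreeAlgebra.ι ℚ (Sum.inl i)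
def etaF (i : ℕ) : FA := FreeAlgebra.ι ℚ (Sum.inr i)

/-- The defining relations of the Cohomological Hall algebra of the quiver `A₂`. -/
inductive Rel : FA → FA → Prop
  | xixi (i j : ℕ) : Rel (xiF i * xiF j) (-(xiF j * xiF i))
  | etaeta (i j : ℕ) : Rel (etaF i * etaF j) (-(etaF j * etaF i))
  | etaxi (i j : ℕ) : Rel (etaF i * xiF j) (xiF (j + 1) * etaF i - xiF j * etaF (i + 1))

abbrev A := RingQuot Rel

def ξ (i : ℕ) : A := RingQuot.mkRingHom Rel (xiF i)
def η (i : ℕ) : A := RingQuot.mkRingHom Rel (etaF i)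

section Ring

variable {R : Type*} [Ring R]

theorem mul_mul_mul_eq_of_mul_eq_sub {a a' b b' c : R} (hba : b * a = a' * b - a * b')
    (ha : a * a = 0) : a * b * (a * c) = a * a' * (b * c) := by
  calc a * b * (a * c) = a * (b * a) * c := by noncomm_ring
    _ = a * a' * (b * c) - a * a * b' * c := by rw [hba]; noncomm_ring
    _ = a * a' * (b * c) := by rw [ha, zero_mul, zero_mul, sub_zero]

theorem mul_mul_mul_eq_neg_of_mul_eq_sub {a b b' c c' : R} (hbc : b * c = c' * b - c * b')
    (hb : b * b = 0) : a * b * (c * b) = -(a * c * (b' * b)) := by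
  calc a * b * (c * b) = a * (b * c) * b := by noncomm_ring
    _ = a * c' * (b * b) - a * c * (b' * b) := by rw [hbc]; noncomm_ring
    _ = -(a * c * (b' * b)) := by rw [hb, mul_zero, zero_sub]

end Ring

instance : IsAddTorsionFree A := .of_module_rat A

theorem ξ_mul_ξ (i j : ℕ) : ξ i * ξ j = -(ξ j * ξ i) := by
  simpa only [ξ, map_mul, map_neg] using RingQuot.mkRingHom_rel (Rel.xixi i j)

theorem η_mul_η (i j : ℕ) : η i * η j = -(η j * η i) := by
  simpa only [η, map_mul, map_neg] using RingQuot.mkRingHom_rel (Rel.etaeta i j)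

theorem η_mul_ξ (i j : ℕ) : η i * ξ j = ξ (j + 1) * η i - ξ j * η (i + 1) := by
  simpa only [ξ, η, map_mul, map_sub] using RingQuot.mkRingHom_rel (Rel.etaxi i j)

theorem ξ_mul_self (i : ℕ) : ξ i * ξ i = 0 :=
  self_eq_neg.mp (ξ_mul_ξ i i)

theorem η_mul_self (i : ℕ) : η i * η i = 0 :=
  self_eq_neg.mp (η_mul_η i i)

theorem stmt11 (i j : ℕ) :
    (ξ 0 * η i) * (ξ 0 * η j) + (ξ 0 * η j) * (ξ 0 * η i) = 0 ∧
    (ξ i * η 0) * (ξ j * η 0) + (ξ j * η 0) * (ξ i * η 0) = 0 := by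
  constructor
  · rw [mul_mul_mul_eq_of_mul_eq_sub (η_mul_ξ i 0) (ξ_mul_self 0),
      mul_mul_mul_eq_of_mul_eq_sub (η_mul_ξ j 0) (ξ_mul_self 0),
      ← mul_add, η_mul_η j i, add_neg_cancel, mul_zero]
  · rw [mul_mul_mul_eq_neg_of_mul_eq_sub (η_mul_ξ 0 j) (η_mul_self 0),
      mul_mul_mul_eq_neg_of_mul_eq_sub (η_mul_ξ 0 i) (η_mul_self 0),
      ← neg_add, ← add_mul, ξ_mul_ξ j i, add_neg_cancel, zero_mul, neg_zero]

end

end Stmt11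
end

section
/- Let F(x; q^{1/2}) = ∏_{n≥1}∏_{i∈ℤ} (q^{i/2} x^n; q)_∞^{c(n,i)} with c(n,i) ∈ ℤ and, for each n, c(n,i) = 0 for |i| sufficiently large. Then G(x;q^{1/2}) := F(x;q^{1/2})/F(qx;q^{1/2}) lies in ℤ[q^{±1/2}][[x]], and its evaluation at q^{1/2} = 1 has the form G(x;1) = ∏_{n≥1}(1-x^n)^{n·c(n)} where c(n) = ∑_i c(n,i). -/
/-!
Replacing `x` by `q x` turns the factor `(a x ^ n; q)_∞` into `(a q ^ n x ^ n; q)_∞`, so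
`G = F(x) / F(q x)` is the product over `n ≥ 1` and `i` of the finite products
`(q ^ (i/2) x ^ n; q)_n ^ c(n,i)`. Each of them is `≡ 1 mod x ^ n` and already makes sense over
`ℤ[T, T⁻¹]` with `T = q ^ (1/2)`, which gives the integrality; and `T ↦ 1` sends
`(q ^ (i/2) x ^ n; q)_n` to `(1 - x ^ n) ^ n`, which gives the evaluation at `q ^ (1/2) = 1`.
-/

namespace Stmt12

noncomputable section

/- `K = ℚ((s))` with `s = q ^ (1/2)`: `sp m = s ^ m`, `qq = q`, and `qfac j = (q; q)_j`. -/
abbrev K := LaurentSeries ℚ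

def sp (m : ℤ) : K := HahnSeries.single m 1

def qq : K := sp 2

def qfac (j : ℕ) : K := ∏ l ∈ Finset.range j, (1 - qq ^ (l + 1))

/-- `(a·x^n ; q)_∞` via Euler's expansion. -/
def poch (n : ℕ) (a : K) : PowerSeries K :=
  PowerSeries.mk fun k =>
    if n ∣ k ∧ n ≠ 0 then
      (-1 : K) ^ (k / n) * qq ^ ((k / n) * (k / n - 1) / 2) * a ^ (k / n) / qfac (k / n)
    else 0

def zpw (f : PowerSeries K) (c : ℤ) : PowerSeries K :=
  f ^ c.toNat * Ring.inverse f ^ (-c).toNat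

def zpwZ (f : PowerSeries ℤ) (c : ℤ) : PowerSeries ℤ :=
  f ^ c.toNat * Ring.inverse f ^ (-c).toNat

/-- The admissible series `F = ∏_{n≥1}∏_i (q^{i/2}x^n;q)_∞^{c(n,i)}`, defined through the
stabilized coefficients of its truncations. -/
def Fof (S : ℕ → Finset ℤ) (c : ℕ → ℤ → ℤ) : PowerSeries K :=
  PowerSeries.mk fun k =>
    PowerSeries.coeff (R := K) k (∏ n ∈ Finset.Icc 1 k, ∏ i ∈ S n, zpw (poch n (sp i)) (c n i))

end

end Stmt12

open PowerSeries

section IntPow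

variable {M N : Type*} [CommMonoidWithZero M] [CommMonoidWithZero N]

/-- Integer powers `f ^ c`, meaningful when `f` is a unit. -/
noncomputable def intPow (f : M) (c : ℤ) : M :=
  f ^ c.toNat * Ring.inverse f ^ (-c).toNat

lemma intPow_coe_units (u : Mˣ) (c : ℤ) : intPow (u : M) c = ((u ^ c : Mˣ) : M) := by
  rw [intPow, Ring.inverse_unit]
  rcases le_or_gt 0 c with hc | hc
  · lift c to ℕ using hc
    simp
  · obtain ⟨m, rfl⟩ := Int.exists_eq_neg_ofNat hc.le
    simp [zpow_neg]

lemma intPow_one (c : ℤ) : intPow (1 : M) c = 1 := by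
  simpa using intPow_coe_units (1 : Mˣ) c

lemma intPow_mul {f g : M} (hf : IsUnit f) (hg : IsUnit g) (c : ℤ) :
    intPow (f * g) c = intPow f c * intPow g c := by
  obtain ⟨u, rfl⟩ := hf
  obtain ⟨v, rfl⟩ := hg
  rw [← Units.val_mul, intPow_coe_units, intPow_coe_units, intPow_coe_units, mul_zpow, Units.val_mul]

lemma intPow_sum {f : M} (hf : IsUnit f) {ι : Type*} (s : Finset ι) (c : ι → ℤ) :
    intPow f (∑ i ∈ s, c i) = ∏ i ∈ s, intPow f (c i) := by
  classical
  obtain ⟨u, rfl⟩ := hf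
  induction s using Finset.induction with
  | empty => simp [intPow_coe_units]
  | insert _ _ h ih =>
    rw [Finset.sum_insert h, Finset.prod_insert h, ← ih]
    simp only [intPow_coe_units, zpow_add, Units.val_mul]

lemma intPow_pow {f : M} (hf : IsUnit f) (n : ℕ) (c : ℤ) :
    intPow (f ^ n) c = intPow f (n * c) := by
  obtain ⟨u, rfl⟩ := hf
  rw [← Units.val_pow_eq_pow_val, intPow_coe_units, intPow_coe_units, zpow_mul, zpow_natCast]

lemma map_intPow {F : Type*} [FunLike F M N] [MonoidWithZeroHomClass F M N] (φ : F) {f : M}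
    (hf : IsUnit f) (c : ℤ) : φ (intPow f c) = intPow (φ f) c := by
  obtain ⟨u, rfl⟩ := hf
  have hφ : φ (u : M) = (Units.map (φ : M →* N) u : N) := rfl
  rw [intPow_coe_units, hφ, intPow_coe_units, ← map_zpow]
  rfl

end IntPow

section CongruentToOne

variable {R : Type*} [CommRing R] {a : R}

lemma dvd_sub_one_iff_mk_eq_one {f : R} :
    a ∣ f - 1 ↔ Ideal.Quotient.mk (Ideal.span {a}) f = 1 := by
  rw [← map_one (Ideal.Quotient.mk _), Ideal.Quotient.eq, Ideal.mem_span_singleton]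

lemma dvd_prod_sub_one {ι : Type*} {s : Finset ι} {f : ι → R} (h : ∀ i ∈ s, a ∣ f i - 1) :
    a ∣ ∏ i ∈ s, f i - 1 := by
  rw [dvd_sub_one_iff_mk_eq_one, map_prod]
  exact Finset.prod_eq_one fun i hi => dvd_sub_one_iff_mk_eq_one.1 (h i hi)

lemma dvd_intPow_sub_one {f : R} (hf : IsUnit f) (h : a ∣ f - 1) (c : ℤ) :
    a ∣ intPow f c - 1 := by
  rw [dvd_sub_one_iff_mk_eq_one, map_intPow _ hf, dvd_sub_one_iff_mk_eq_one.1 h, intPow_one]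

end CongruentToOne

namespace PowerSeries

variable {R S : Type*} [CommRing R] [CommRing S]

lemma isUnit_of_X_pow_dvd_sub_one {n : ℕ} (hn : 0 < n) {f : R⟦X⟧} (h : X ^ n ∣ f - 1) :
    IsUnit f := by
  have hX : X ∣ f - 1 := (dvd_pow_self X hn.ne').trans h
  rw [X_dvd_iff, map_sub, map_one, sub_eq_zero] at hX
  rw [isUnit_iff_constantCoeff, hX]
  exact isUnit_one

lemma X_pow_dvd_one_sub_C_mul_X_pow (n : ℕ) (u : R) :
    X ^ n ∣ 1 - C u * X ^ n - 1 :=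
  ⟨-C u, by ring⟩

lemma X_pow_dvd_rescale_sub_one {n : ℕ} {f : R⟦X⟧} (h : X ^ n ∣ f - 1) (a : R) :
    X ^ n ∣ rescale a f - 1 := by
  have := map_dvd (rescale a) h
  rw [map_pow, rescale_X, mul_pow, map_sub, map_one] at this
  exact (dvd_mul_left _ _).trans this

lemma coeff_mul_congr {k : ℕ} {f f' g g' : R⟦X⟧} (hf : ∀ j ≤ k, coeff j f = coeff j f')
    (hg : ∀ j ≤ k, coeff j g = coeff j g') : coeff k (f * g) = coeff k (f' * g') := by
  simp only [coeff_mul]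
  refine Finset.sum_congr rfl fun p hp => ?_
  have hp' := Finset.HasAntidiagonal.antidiagonal.fst_le hp
  have hp'' := Finset.HasAntidiagonal.antidiagonal.snd_le hp
  rw [hf _ hp', hg _ hp'']

lemma coeff_mul_of_X_pow_dvd_sub_one {k : ℕ} (f : R⟦X⟧) {g : R⟦X⟧} (h : X ^ (k + 1) ∣ g - 1) :
    coeff k (f * g) = coeff k f := by
  have hfg : f * g = f + f * (g - 1) := by ring
  rw [hfg, map_add, X_pow_dvd_iff.1 (dvd_mul_of_dvd_right h f) k k.lt_succ_self, add_zero]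

/-- The infinite product `∏_{n ≥ 1} f n`, defined through its truncations; it is the honest
product when `f n ≡ 1 mod X ^ n`. -/
noncomputable def stableProd (f : ℕ → R⟦X⟧) : R⟦X⟧ :=
  mk fun k => coeff k (∏ n ∈ Finset.Icc 1 k, f n)

lemma coeff_stableProd (f : ℕ → R⟦X⟧) (k : ℕ) :
    coeff k (stableProd f) = coeff k (∏ n ∈ Finset.Icc 1 k, f n) :=
  coeff_mk _ _

lemma coeff_stableProd_of_le {f : ℕ → R⟦X⟧} (hf : ∀ n, 0 < n → X ^ n ∣ f n - 1) {k N : ℕ}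
    (hkN : k ≤ N) : coeff k (stableProd f) = coeff k (∏ n ∈ Finset.Icc 1 N, f n) := by
  have hsplit : Finset.Icc 1 N = Finset.Icc 1 k ∪ Finset.Icc (k + 1) N := by
    ext x; simp only [Finset.mem_union, Finset.mem_Icc]; omega
  have hdisj : Disjoint (Finset.Icc 1 k) (Finset.Icc (k + 1) N) :=
    Finset.disjoint_left.2 fun x hx hx' => by
      simp only [Finset.mem_Icc] at hx hx'; omega
  have htail : X ^ (k + 1) ∣ ∏ n ∈ Finset.Icc (k + 1) N, f n - 1 :=
    dvd_prod_sub_one fun n hn => by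
      have hn := Finset.mem_Icc.1 hn
      exact (pow_dvd_pow X hn.1).trans (hf n (by omega))
  rw [coeff_stableProd, hsplit, Finset.prod_union hdisj, coeff_mul_of_X_pow_dvd_sub_one _ htail]

lemma stableProd_congr {f g : ℕ → R⟦X⟧} (h : ∀ n, 0 < n → f n = g n) :
    stableProd f = stableProd g :=
  ext fun k => by
    rw [coeff_stableProd, coeff_stableProd,
      Finset.prod_congr rfl fun n hn => h n (Finset.mem_Icc.1 hn).1]

lemma stableProd_mul {f g : ℕ → R⟦X⟧} (hf : ∀ n, 0 < n → X ^ n ∣ f n - 1)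
    (hg : ∀ n, 0 < n → X ^ n ∣ g n - 1) :
    stableProd (fun n => f n * g n) = stableProd f * stableProd g :=
  ext fun k => by
    rw [coeff_stableProd, Finset.prod_mul_distrib]
    exact coeff_mul_congr (fun j hj => (coeff_stableProd_of_le hf hj).symm)
      (fun j hj => (coeff_stableProd_of_le hg hj).symm)

lemma constantCoeff_stableProd (f : ℕ → R⟦X⟧) : constantCoeff (stableProd f) = 1 := by
  simp [← coeff_zero_eq_constantCoeff_apply, coeff_stableProd]

lemma map_stableProd (φ : R →+* S) (f : ℕ → R⟦X⟧) :
    map φ (stableProd f) = stableProd fun n => map φ (f n) :=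
  ext fun k => by rw [coeff_map, coeff_stableProd, coeff_stableProd, ← map_prod, coeff_map]

lemma rescale_stableProd (a : R) (f : ℕ → R⟦X⟧) :
    rescale a (stableProd f) = stableProd fun n => rescale a (f n) :=
  ext fun k => by
    rw [coeff_rescale, coeff_stableProd, coeff_stableProd, ← map_prod, coeff_rescale]

/-- The finite `q`-Pochhammer symbol `(a X ^ n; q)_t`. -/
noncomputable def finPoch (a q : R) (n t : ℕ) : R⟦X⟧ :=
  ∏ l ∈ Finset.range t, (1 - C (a * q ^ l) * X ^ n)

lemma X_pow_dvd_finPoch_sub_one (a q : R) (n t : ℕ) : X ^ n ∣ finPoch a q n t - 1 :=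
  dvd_prod_sub_one fun _ _ => X_pow_dvd_one_sub_C_mul_X_pow n _

lemma map_finPoch (φ : R →+* S) (a q : R) (n t : ℕ) :
    map φ (finPoch a q n t) = finPoch (φ a) (φ q) n t := by
  simp [finPoch, map_prod]

lemma finPoch_one_one (n t : ℕ) : finPoch (1 : R) 1 n t = (1 - X ^ n) ^ t := by
  simp [finPoch]

end PowerSeries

lemma LaurentPolynomial.exists_eq_toLaurent_mul_T {R : Type*} [Semiring R]
    (L : LaurentPolynomial R) : ∃ (m : ℕ) (p : Polynomial R), L = p.toLaurent * T (-m) := by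
  obtain ⟨m, p, hp⟩ := L.exists_T_pow
  exact ⟨m, p, by rw [hp, mul_T_assoc, add_neg_cancel, T_zero, mul_one]⟩

namespace Stmt12

noncomputable section

lemma sp_eq_zpow (a : ℤ) : sp a = sp 1 ^ a :=
  RatFunc.single_zpow a

lemma qq_pow (n : ℕ) : qq ^ n = sp (2 * n) := by
  rw [qq, sp_eq_zpow 2, sp_eq_zpow (2 * n), ← zpow_natCast, ← zpow_mul]

lemma qfac_ne_zero (j : ℕ) : qfac j ≠ 0 := by
  refine Finset.prod_ne_zero_iff.2 fun l _ h => ?_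
  have h0 := congrArg (HahnSeries.coeff · 0) h
  simp [qq_pow, sp, show (l : ℤ) + 1 ≠ 0 by omega] at h0

lemma coeff_poch_mul {n : ℕ} (hn : 0 < n) (j : ℕ) (a : K) :
    coeff (n * j) (poch n a) = (-1) ^ j * qq ^ (j * (j - 1) / 2) * a ^ j / qfac j := by
  simp [poch, hn.ne', Nat.mul_div_cancel_left j hn]

lemma coeff_poch_of_not_dvd {n k : ℕ} (h : ¬ n ∣ k) (a : K) : coeff k (poch n a) = 0 := by
  simp [poch, h]

lemma coeff_poch_mul_succ {n : ℕ} (hn : 0 < n) (a : K) (m : ℕ) :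
    coeff (n * (m + 1)) (poch n a) =
      coeff (n * (m + 1)) (poch n (a * qq)) - a * coeff (n * m) (poch n (a * qq)) := by
  have hq : (1 : K) - qq ^ (m + 1) ≠ 0 := fun h =>
    qfac_ne_zero (m + 1) (by rw [qfac, Finset.prod_range_succ, h, mul_zero])
  have htri : (m + 1) * m / 2 = m * (m - 1) / 2 + m := by simpa using Nat.triangle_succ m
  rw [coeff_poch_mul hn, coeff_poch_mul hn, coeff_poch_mul hn, Nat.add_sub_cancel, htri, qfac,
    Finset.prod_range_succ, ← qfac, pow_add, mul_pow, mul_pow]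
  field_simp [qfac_ne_zero m]
  ring

lemma poch_eq_one_sub_mul_poch {n : ℕ} (hn : 0 < n) (a : K) :
    poch n a = (1 - C a * X ^ n) * poch n (a * qq) := by
  refine ext fun k => ?_
  rw [sub_mul, one_mul, map_sub, mul_assoc, coeff_C_mul, coeff_X_pow_mul']
  by_cases hd : n ∣ k
  · obtain ⟨j, rfl⟩ := hd
    rcases j with _ | m
    · have h0 (b : K) : coeff 0 (poch n b) = 1 := by simpa [qfac] using coeff_poch_mul hn 0 b
      rw [if_neg (by omega), mul_zero, h0, h0, mul_zero, sub_zero]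
    · have hsub : n * (m + 1) - n = n * m := by rw [Nat.mul_succ, Nat.add_sub_cancel]
      rw [if_pos (Nat.le_mul_of_pos_right n m.succ_pos), hsub, coeff_poch_mul_succ hn]
  · rw [coeff_poch_of_not_dvd hd, coeff_poch_of_not_dvd hd]
    split_ifs with hnk
    · have hnd : ¬ n ∣ k - n := fun h => hd <| by
        simpa [Nat.sub_add_cancel hnk] using Nat.dvd_add h (dvd_refl n)
      rw [coeff_poch_of_not_dvd hnd, mul_zero, sub_zero]
    · rw [mul_zero, sub_zero]

lemma poch_eq_finPoch_mul {n : ℕ} (hn : 0 < n) (a : K) (t : ℕ) :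
    poch n a = finPoch a qq n t * poch n (a * qq ^ t) := by
  induction t with
  | zero => simp [finPoch]
  | succ t ih =>
    rw [ih, finPoch, finPoch, Finset.prod_range_succ, poch_eq_one_sub_mul_poch hn (a * qq ^ t), pow_succ,
      ← mul_assoc a]
    ring

lemma rescale_poch {n : ℕ} (hn : 0 < n) (a : K) :
    rescale qq (poch n a) = poch n (a * qq ^ n) := by
  refine ext fun k => ?_
  rw [coeff_rescale]
  by_cases hd : n ∣ k
  · obtain ⟨j, rfl⟩ := hd
    rw [coeff_poch_mul hn, coeff_poch_mul hn, mul_pow, ← pow_mul]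
    ring
  · rw [coeff_poch_of_not_dvd hd, coeff_poch_of_not_dvd hd, mul_zero]

lemma X_pow_dvd_poch_sub_one {n : ℕ} (hn : 0 < n) (a : K) : X ^ n ∣ poch n a - 1 := by
  refine X_pow_dvd_iff.2 fun k hk => ?_
  rcases k with _ | k
  · rw [map_sub, coeff_one, if_pos rfl, sub_eq_zero]
    simpa [qfac] using coeff_poch_mul hn 0 a
  · rw [map_sub, coeff_poch_of_not_dvd (fun hd => by have := Nat.le_of_dvd k.succ_pos hd; omega),
      coeff_one, if_neg k.succ_ne_zero, sub_zero]

lemma isUnit_poch {n : ℕ} (hn : 0 < n) (a : K) : IsUnit (poch n a) :=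
  isUnit_of_X_pow_dvd_sub_one hn (X_pow_dvd_poch_sub_one hn a)

/-- `x ↦ q x` shifts `a ↦ a q ^ n` in `(a x ^ n; q)_∞`, and
`(a x ^ n; q)_∞ = (a x ^ n; q)_n (a q ^ n x ^ n; q)_∞`. -/
lemma rescale_intPow_poch_mul {n : ℕ} (hn : 0 < n) (a : K) (e : ℤ) :
    rescale qq (intPow (poch n a) e) * intPow (finPoch a qq n n) e = intPow (poch n a) e := by
  have hfin := isUnit_of_X_pow_dvd_sub_one hn (X_pow_dvd_finPoch_sub_one a qq n n)
  rw [map_intPow _ (isUnit_poch hn a), rescale_poch hn, ← intPow_mul (isUnit_poch hn _) hfin,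
    mul_comm, ← poch_eq_finPoch_mul hn]

section Ratio

variable (S : ℕ → Finset ℤ) (c : ℕ → ℤ → ℤ)

/-- The `n`-th factor `∏_i (s ^ i x ^ n; s ^ 2)_n ^ c(n,i)` of `G`, for a unit `s` playing the role
of `q ^ (1/2)`. -/
def ratioFactor {R : Type*} [CommRing R] (s : Rˣ) (n : ℕ) : R⟦X⟧ :=
  ∏ i ∈ S n, intPow (finPoch ((s ^ i : Rˣ) : R) ((s ^ 2 : Rˣ) : R) n n) (c n i)

variable {S c}

lemma X_pow_dvd_ratioFactor_sub_one {R : Type*} [CommRing R] (s : Rˣ) {n : ℕ} (hn : 0 < n) :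
    X ^ n ∣ ratioFactor S c s n - 1 :=
  dvd_prod_sub_one fun _ _ => dvd_intPow_sub_one
    (isUnit_of_X_pow_dvd_sub_one hn (X_pow_dvd_finPoch_sub_one _ _ n n))
    (X_pow_dvd_finPoch_sub_one _ _ n n) _

lemma map_ratioFactor {R R' : Type*} [CommRing R] [CommRing R'] (φ : R →+* R') (s : Rˣ) {n : ℕ}
    (hn : 0 < n) : map φ (ratioFactor S c s n) = ratioFactor S c (Units.map φ s) n := by
  simp only [ratioFactor, map_prod]
  refine Finset.prod_congr rfl fun i _ => ?_
  rw [map_intPow _ (isUnit_of_X_pow_dvd_sub_one hn (X_pow_dvd_finPoch_sub_one _ _ n n)),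
    map_finPoch, ← map_zpow, ← map_pow, Units.coe_map, Units.coe_map]
  rfl

lemma ratioFactor_one {R : Type*} [CommRing R] {n : ℕ} (hn : 0 < n) :
    ratioFactor S c (1 : Rˣ) n = intPow (1 - X ^ n) (n * ∑ i ∈ S n, c n i) := by
  have hu : IsUnit (1 - X ^ n : R⟦X⟧) :=
    isUnit_of_X_pow_dvd_sub_one hn ⟨-1, by ring⟩
  simp only [ratioFactor, one_zpow, one_pow, Units.val_one, finPoch_one_one, intPow_pow hu,
    Finset.mul_sum, intPow_sum hu]

end Ratio

def qHalf : Kˣ := Units.mk0 (sp 1) (HahnSeries.single_ne_zero one_ne_zero)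

lemma coe_qHalf_zpow (i : ℤ) : ((qHalf ^ i : Kˣ) : K) = sp i := by
  rw [Units.val_zpow_eq_zpow_val, sp_eq_zpow]
  rfl

lemma coe_qHalf_sq : ((qHalf ^ 2 : Kˣ) : K) = qq := by
  rw [← zpow_natCast, coe_qHalf_zpow]
  rfl

lemma Fof_eq_stableProd (S : ℕ → Finset ℤ) (c : ℕ → ℤ → ℤ) :
    Fof S c = stableProd fun n => ∏ i ∈ S n, intPow (poch n (sp i)) (c n i) :=
  rfl

lemma rescale_Fof_mul (S : ℕ → Finset ℤ) (c : ℕ → ℤ → ℤ) :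
    rescale qq (Fof S c) * stableProd (ratioFactor S c qHalf) = Fof S c := by
  have hdvd : ∀ n, 0 < n → X ^ n ∣ ∏ i ∈ S n, intPow (poch n (sp i)) (c n i) - 1 :=
    fun n hn => dvd_prod_sub_one fun i _ =>
      dvd_intPow_sub_one (isUnit_poch hn _) (X_pow_dvd_poch_sub_one hn _) _
  rw [Fof_eq_stableProd, rescale_stableProd,
    ← stableProd_mul (fun n hn => X_pow_dvd_rescale_sub_one (hdvd n hn) qq)
      (fun n hn => X_pow_dvd_ratioFactor_sub_one qHalf hn)]
  refine stableProd_congr fun n hn => ?_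
  rw [map_prod, ratioFactor, ← Finset.prod_mul_distrib]
  refine Finset.prod_congr rfl fun i _ => ?_
  rw [coe_qHalf_zpow, coe_qHalf_sq, rescale_intPow_poch_mul hn]

lemma Fof_mul_inv_rescale (S : ℕ → Finset ℤ) (c : ℕ → ℤ → ℤ) :
    Fof S c * (rescale qq (Fof S c))⁻¹ = stableProd (ratioFactor S c qHalf) := by
  have h0 : constantCoeff (rescale qq (Fof S c)) ≠ 0 := by
    rw [← coeff_zero_eq_constantCoeff_apply, coeff_rescale, pow_zero, one_mul,
      coeff_zero_eq_constantCoeff_apply, Fof_eq_stableProd, constantCoeff_stableProd]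
    exact one_ne_zero
  exact ((eq_mul_inv_iff_mul_eq h0).2 (by rw [mul_comm, rescale_Fof_mul])).symm

open LaurentPolynomial

def unitT : (ℤ[T;T⁻¹])ˣ := (isUnit_T 1).unit

lemma map_eval₂_stableProd_ratioFactor {R : Type*} [CommRing R] (S : ℕ → Finset ℤ)
    (c : ℕ → ℤ → ℤ) (x : Rˣ) :
    map (eval₂ (Int.castRingHom R) x) (stableProd (ratioFactor S c unitT)) =
      stableProd (ratioFactor S c x) := by
  have hx : Units.map (eval₂ (Int.castRingHom R) x : ℤ[T;T⁻¹] →* R) unitT = x :=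
    Units.ext (by simp [unitT])
  rw [map_stableProd]
  exact stableProd_congr fun n hn => by rw [map_ratioFactor _ _ hn, hx]

theorem stmt12_general (S : ℕ → Finset ℤ) (c : ℕ → ℤ → ℤ) :
    ∃ (g : ℕ → Polynomial ℤ) (m : ℕ → ℤ),
      -- G = F(x)/F(qx) has coefficients in ℤ[q^{±1/2}] :
      (∀ k, PowerSeries.coeff (R := K) k (Fof S c * (PowerSeries.rescale qq (Fof S c))⁻¹) =
          HahnSeries.single (m k) (1 : ℚ) * Polynomial.aeval (sp 1) (g k)) ∧
      -- and the evaluation at q^{1/2} = 1 is ∏_{n≥1}(1-x^n)^{n·c(n)} :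
      (∀ k, Polynomial.eval (1 : ℤ) (g k) =
          PowerSeries.coeff (R := ℤ) k
            (∏ n ∈ Finset.Icc 1 k,
              zpwZ (1 - (PowerSeries.X : PowerSeries ℤ) ^ n) ((n : ℤ) * ∑ i ∈ S n, c n i))) := by
  set G := stableProd (ratioFactor S c unitT)
  choose m g hg using fun k => LaurentPolynomial.exists_eq_toLaurent_mul_T (coeff k G)
  refine ⟨g, fun k => -m k, fun k => ?_, fun k => ?_⟩
  · rw [Fof_mul_inv_rescale, ← map_eval₂_stableProd_ratioFactor, coeff_map, hg, map_mul,
      eval₂_toLaurent, eval₂_T, coe_qHalf_zpow, mul_comm, Polynomial.aeval_def,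
      RingHom.ext_int (algebraMap ℤ K) (Int.castRingHom K)]
    rfl
  · have h1 : eval₂ (Int.castRingHom ℤ) (1 : ℤˣ) (coeff k G) = (g k).eval 1 := by
      rw [hg, map_mul, eval₂_toLaurent, eval₂_T, one_zpow, Units.val_one, mul_one]
      rfl
    rw [← h1, ← coeff_map, map_eval₂_stableProd_ratioFactor, coeff_stableProd]
    exact congrArg (coeff k) (Finset.prod_congr rfl fun n hn =>
      ratioFactor_one (Finset.mem_Icc.1 hn).1)

theorem stmt12 (S : ℕ → Finset ℤ) (c : ℕ → ℤ → ℤ)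
    (hc : ∀ n i, i ∉ S n → c n i = 0) :
    ∃ (g : ℕ → Polynomial ℤ) (m : ℕ → ℤ),
      -- G = F(x)/F(qx) has coefficients in ℤ[q^{±1/2}] :
      (∀ k, PowerSeries.coeff (R := K) k (Fof S c * (PowerSeries.rescale qq (Fof S c))⁻¹) =
          HahnSeries.single (m k) (1 : ℚ) * Polynomial.aeval (sp 1) (g k)) ∧
      -- and the evaluation at q^{1/2} = 1 is ∏_{n≥1}(1-x^n)^{n·c(n)} :
      (∀ k, Polynomial.eval (1 : ℤ) (g k) =
          PowerSeries.coeff (R := ℤ) k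
            (∏ n ∈ Finset.Icc 1 k,
              zpwZ (1 - (PowerSeries.X : PowerSeries ℤ) ^ n) ((n : ℤ) * ∑ i ∈ S n, c n i))) :=
  stmt12_general S c

end

end Stmt12
end
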